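/- Suppose φ₀ : (Fin n → ℝ) → ℝ is differentiable and satisfies the steady-state HJB equation with state cost m₀ (for all x: ∇φ₀(x) ⬝ᵥ f(x) − (1/4)·((g x)ᵀ.mulVec (∇φ₀ x)) ⬝ᵥ (R⁻¹.mulVec ((g x)ᵀ.mulVec (∇φ₀ x))) + m₀(x) = 0), and h : (Fin n → ℝ) → ℝ is differentiable and satisfies for all x: ∇h(x) ⬝ᵥ (f(x) − (1/2)·(g x).mulVec (R⁻¹.mulVec ((g x)ᵀ.mulVec (∇φ₀ x)))) = −m̄(x). Set φ_p := φ₀ + h and u*_p(y) := −(1/2)·R⁻¹.mulVec ((g y)ᵀ.mulVec (∇φ_p y)). If x : ℝ → (Fin n → ℝ) is differentiable and solves x'(t) = f(x(t)) + (g (x t)).mulVec (u*_p (x t)) for all t, then for every t the composite t ↦ φ_p(x(t)) has derivative at t equal to −m₀(x(t)) − m̄(x(t)) − (1/4)·‖R⁻¹.mulVec ((g (x t))ᵀ.mulVec (∇h (x t)))‖²_R − ‖u*_p(x(t))‖²_R. -/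

import Mathlib

open Matrix

/-- Euclidean gradient of a scalar function on `Fin n → ℝ`:
the vector of partial derivatives. -/
noncomputable def grad {n : ℕ} (φ : (Fin n → ℝ) → ℝ) (x : Fin n → ℝ) : Fin n → ℝ :=
  fun i => fderiv ℝ φ x (Pi.single i 1)

/-- `R`-weighted squared norm `‖u‖²_R = u ⬝ᵥ R.mulVec u`. -/
def sqR {p : ℕ} (R : Matrix (Fin p) (Fin p) ℝ) (u : Fin p → ℝ) : ℝ :=
  u ⬝ᵥ R.mulVec u

/-!
Along a closed-loop trajectory the derivative of `φ_p ∘ x` is `∇φ_p · (f + g u*_p)`. With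
`α = gᵀ∇φ₀`, `β = gᵀ∇h` and `Q w = w ⬝ᵥ R⁻¹ w`, the HJB equation gives `∇φ₀ · f = Q α / 4 - m₀`,
the linear PDE gives `∇h · f = ½ β ⬝ᵥ R⁻¹ α - m̄`, and `(∇φ_p)ᵀ g u*_p = -½ Q(α + β)`. Since
`‖u*_p‖²_R = ¼ Q(α + β)` and `‖R⁻¹β‖²_R = Q β`, expanding `Q(α + β)` by symmetry of `R⁻¹`
turns the sum into the claimed expression.
-/

lemma grad_add {n : ℕ} {φ ψ : (Fin n → ℝ) → ℝ} {x : Fin n → ℝ}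
    (hφ : DifferentiableAt ℝ φ x) (hψ : DifferentiableAt ℝ ψ x) :
    grad (φ + ψ) x = grad φ x + grad ψ x := by
  funext i
  simp [grad, fderiv_add hφ hψ]

lemma fderiv_apply_eq_grad_dotProduct {n : ℕ} (φ : (Fin n → ℝ) → ℝ) (x v : Fin n → ℝ) :
    fderiv ℝ φ x v = grad φ x ⬝ᵥ v := by
  conv_lhs => rw [pi_eq_sum_univ' v]
  simp [map_sum, grad, dotProduct, mul_comm]

lemma HasDerivAt.comp_grad {n : ℕ} {φ : (Fin n → ℝ) → ℝ} {x : ℝ → Fin n → ℝ}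
    {v : Fin n → ℝ} {t : ℝ} (hφ : DifferentiableAt ℝ φ (x t)) (hx : HasDerivAt x v t) :
    HasDerivAt (fun s => φ (x s)) (grad φ (x t) ⬝ᵥ v) t := by
  rw [← fderiv_apply_eq_grad_dotProduct]
  exact hφ.hasFDerivAt.comp_hasDerivAt t hx

lemma Matrix.IsSymm.dotProduct_mulVec_comm {m α : Type*} [Fintype m] [CommSemiring α]
    {M : Matrix m m α} (hM : M.IsSymm) (u w : m → α) :
    u ⬝ᵥ M *ᵥ w = w ⬝ᵥ M *ᵥ u := by
  rw [dotProduct_mulVec, ← mulVec_transpose, hM.eq, dotProduct_comm]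

lemma Matrix.IsSymm.add_dotProduct_mulVec_add {m α : Type*} [Fintype m] [CommSemiring α]
    {M : Matrix m m α} (hM : M.IsSymm) (u w : m → α) :
    (u + w) ⬝ᵥ M *ᵥ (u + w) = u ⬝ᵥ M *ᵥ u + 2 * (w ⬝ᵥ M *ᵥ u) + w ⬝ᵥ M *ᵥ w := by
  rw [mulVec_add, add_dotProduct, dotProduct_add, dotProduct_add, hM.dotProduct_mulVec_comm u w]
  ring

lemma sqR_smul {p : ℕ} (R : Matrix (Fin p) (Fin p) ℝ) (c : ℝ) (u : Fin p → ℝ) :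
    sqR R (c • u) = c ^ 2 * sqR R u := by
  simp only [sqR, mulVec_smul, dotProduct_smul, smul_dotProduct, smul_eq_mul]
  ring

lemma sqR_inv_mulVec {p : ℕ} {R : Matrix (Fin p) (Fin p) ℝ} (hR : IsUnit R) (w : Fin p → ℝ) :
    sqR R (R⁻¹ *ᵥ w) = w ⬝ᵥ R⁻¹ *ᵥ w := by
  rw [sqR, mulVec_mulVec, mul_nonsing_inv R (R.isUnit_iff_isUnit_det.mp hR), one_mulVec,
    dotProduct_comm]

lemma closedLoop_dotProduct_eq {n p : ℕ} {R : Matrix (Fin p) (Fin p) ℝ} (hRsymm : R.IsSymm)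
    (hR : IsUnit R) (G : Matrix (Fin n) (Fin p) ℝ) (a b fx : Fin n → ℝ) (c₀ cbar : ℝ)
    (hHJB : a ⬝ᵥ fx - (1/4) * (Gᵀ *ᵥ a ⬝ᵥ R⁻¹ *ᵥ (Gᵀ *ᵥ a)) + c₀ = 0)
    (hPDE : b ⬝ᵥ (fx - (1/2 : ℝ) • G *ᵥ (R⁻¹ *ᵥ (Gᵀ *ᵥ a))) = -cbar)
    (u : Fin p → ℝ) (hu : u = -(1/2 : ℝ) • R⁻¹ *ᵥ (Gᵀ *ᵥ (a + b))) :
    (a + b) ⬝ᵥ (fx + G *ᵥ u)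
      = -c₀ - cbar - (1/4) * sqR R (R⁻¹ *ᵥ (Gᵀ *ᵥ b)) - sqR R u := by
  have transpose_dot : ∀ (c : Fin n → ℝ) (w : Fin p → ℝ), c ⬝ᵥ G *ᵥ w = Gᵀ *ᵥ c ⬝ᵥ w :=
    fun c w => by rw [dotProduct_mulVec, ← mulVec_transpose]
  set α := Gᵀ *ᵥ a
  set β := Gᵀ *ᵥ b
  have hPDE' : b ⬝ᵥ fx - (1/2) * (β ⬝ᵥ R⁻¹ *ᵥ α) = -cbar := by
    rwa [dotProduct_sub, dotProduct_smul, smul_eq_mul, transpose_dot] at hPDE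
  have hcontrol : (a + b) ⬝ᵥ G *ᵥ u = -(1/2) * ((α + β) ⬝ᵥ R⁻¹ *ᵥ (α + β)) := by
    rw [hu, transpose_dot, mulVec_add, dotProduct_smul, smul_eq_mul]
  have hnorm : sqR R u = (1/4) * ((α + β) ⬝ᵥ R⁻¹ *ᵥ (α + β)) := by
    rw [hu, sqR_smul, sqR_inv_mulVec hR, mulVec_add]
    ring
  have hexpand := hRsymm.inv.add_dotProduct_mulVec_add α β
  rw [dotProduct_add, add_dotProduct, hcontrol, hnorm, sqR_inv_mulVec hR]
  linear_combination hHJB + hPDE' - (1/4 : ℝ) * hexpand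

theorem stmt_9 {n p : ℕ}
    (f : (Fin n → ℝ) → (Fin n → ℝ))
    (g : (Fin n → ℝ) → Matrix (Fin n) (Fin p) ℝ)
    (R : Matrix (Fin p) (Fin p) ℝ)
    (hRsymm : R.IsSymm) (hRpd : R.PosDef)
    (m₀ mbar : (Fin n → ℝ) → ℝ)
    (φ₀ h : (Fin n → ℝ) → ℝ)
    (hφ₀ : Differentiable ℝ φ₀) (hh : Differentiable ℝ h)
    (hHJB : ∀ x, grad φ₀ x ⬝ᵥ f x
        - (1/4) * ((g x)ᵀ.mulVec (grad φ₀ x) ⬝ᵥ R⁻¹.mulVec ((g x)ᵀ.mulVec (grad φ₀ x)))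
        + m₀ x = 0)
    (hPDE : ∀ x, grad h x ⬝ᵥ
        (f x - (1/2 : ℝ) • (g x).mulVec (R⁻¹.mulVec ((g x)ᵀ.mulVec (grad φ₀ x)))) = - mbar x)
    (φp : (Fin n → ℝ) → ℝ) (hφp : φp = φ₀ + h)
    (ustarp : (Fin n → ℝ) → (Fin p → ℝ))
    (hustarp : ∀ y, ustarp y = -(1/2 : ℝ) • R⁻¹.mulVec ((g y)ᵀ.mulVec (grad φp y)))
    (x : ℝ → (Fin n → ℝ))
    (hx : ∀ t, HasDerivAt x (f (x t) + (g (x t)).mulVec (ustarp (x t))) t) :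
    ∀ t, HasDerivAt (fun s => φp (x s))
      (-(m₀ (x t)) - mbar (x t)
        - (1/4) * sqR R (R⁻¹.mulVec ((g (x t))ᵀ.mulVec (grad h (x t))))
        - sqR R (ustarp (x t))) t := by
  intro t
  subst hφp
  have hgrad : ∀ y, grad (φ₀ + h) y = grad φ₀ y + grad h y := fun y => grad_add (hφ₀ y) (hh y)
  have hderiv := HasDerivAt.comp_grad ((hφ₀ (x t)).add (hh (x t))) (hx t)
  rwa [hgrad, closedLoop_dotProduct_eq hRsymm hRpd.isUnit _ _ _ _ _ _ (hHJB _) (hPDE _) _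
    (by rw [hustarp, hgrad])] at hderiv
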